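/- arXiv:1601.08115 — 7 statements merged into one kernel-verified Lean document; each statement's English description precedes it below -/
import Mathlib

section
/- Let f be a nonzero linear functional on ⋀^k V with associated alternating k-linear form α. The hyperplane H_f of the k-Grassmannian (the set of k-dimensional subspaces X of V on which α vanishes identically) meets every line ℓ_{Y,Z} = {X : Y ⊂ X ⊂ Z, dim X = k} (where dim Y = k−1, dim Z = k+1) in either a single point or the whole line, and H_f is a proper subset of the set of all k-subspaces. -/
/-!
Fix a basis `y₁, …, y_{k-1}` of `Y`. On a `k`-space `X ⊇ Y` the form `α` is a multiple of the
determinant, so it vanishes on `X` as soon as it vanishes on `(y₁, …, y_{k-1}, u)` for one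
`u ∈ X \ Y`. Hence `X ∈ H_f` iff `X ⊆ ker φ` for the linear form `φ u = α (y₁, …, y_{k-1}, u)`,
which vanishes on `Y`: the line `ℓ_{Y,Z}` lies in `H_f` if `Z ⊆ ker φ`, and otherwise meets it
only in the `k`-space `Z ∩ ker φ`. Finally `α ≠ 0` because wedges span `⋀^k V`, and the span of
any `v` with `α v ≠ 0` is a `k`-space outside `H_f`.
-/

open Module

/-- The wedge `v₁ ∧ ⋯ ∧ vₖ`, as an element of the `k`-th exterior power `⋀[K]^k V`. -/
noncomputable def wedge (K : Type*) {V : Type*} [Field K] [AddCommGroup V] [Module K V]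
    (k : ℕ) (v : Fin k → V) : ⋀[K]^k V :=
  ⟨ExteriorAlgebra.ιMulti K k v, ExteriorAlgebra.ιMulti_range K k (Set.mem_range_self v)⟩

section

open Submodule

variable {K V : Type*} [Field K] [AddCommGroup V] [Module K V]

namespace AlternatingMap

variable {ι : Type*}

def VanishesOn (α : AlternatingMap K V K ι) (X : Submodule K V) : Prop :=
  ∀ v : ι → V, (∀ i, v i ∈ X) → α v = 0

variable [Fintype ι]

theorem vanishesOn_of_linearIndependent [FiniteDimensional K V] (α : AlternatingMap K V K ι)
    {X : Submodule K V} (hX : finrank K X = Fintype.card ι) {v : ι → V} (hvX : ∀ i, v i ∈ X)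
    (hv : LinearIndependent K v) (hαv : α v = 0) : α.VanishesOn X := by
  classical
  intro w hwX
  let b : Basis ι K X := basisOfLinearIndependentOfCardEqFinrank' (fun i => ⟨v i, hvX i⟩)
    (.of_comp X.subtype hv) hX.symm
  have hdet := (α.compLinearMap X.subtype).eq_smul_basis_det b
  have hb : α.compLinearMap X.subtype b = 0 := by
    simpa [b, coe_basisOfLinearIndependentOfCardEqFinrank'] using hαv
  simpa [hb] using congr($hdet fun i => ⟨w i, hwX i⟩)

theorem exists_finrank_eq_not_vanishesOn (α : AlternatingMap K V K ι) (hα : α ≠ 0) :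
    ∃ X : Submodule K V, finrank K X = Fintype.card ι ∧ ¬ α.VanishesOn X := by
  obtain ⟨v, hv⟩ : ∃ v, α v ≠ 0 := not_forall.mp fun h => hα (ext h)
  have hli : LinearIndependent K v := by
    by_contra hdep
    exact hv (α.map_linearDependent v hdep)
  exact ⟨span K (Set.range v), finrank_span_eq_card hli,
    fun h => hv (h v fun i => subset_span ⟨i, rfl⟩)⟩

variable {m : ℕ} (α : AlternatingMap K V K (Fin (m + 1))) {y : Fin m → V}

theorem curryRight_apply_eq_zero_of_mem_span {u : V} (hu : u ∈ span K (Set.range y)) :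
    α.toMultilinearMap.curryRight y u = 0 :=
  α.map_linearDependent _ fun h => (linearIndependent_finSnoc.mp h).2 hu

theorem vanishesOn_iff_le_ker_curryRight [FiniteDimensional K V] (hy : LinearIndependent K y)
    {X : Submodule K V} (hyX : span K (Set.range y) ≤ X) (hX : finrank K X = m + 1) :
    α.VanishesOn X ↔ X ≤ LinearMap.ker (α.toMultilinearMap.curryRight y) := by
  have hsnoc_mem : ∀ u ∈ X, ∀ i, (Fin.snoc y u : Fin (m + 1) → V) i ∈ X := fun u hu i =>
    Fin.lastCases (by simpa using hu)
      (fun j => by simpa using hyX (subset_span ⟨j, rfl⟩)) i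
  constructor
  · exact fun h u hu => h _ (hsnoc_mem u hu)
  · intro hXker
    have hlt : span K (Set.range y) < X := lt_of_le_of_ne hyX fun h => by
      have := finrank_span_eq_card hy
      rw [h, hX, Fintype.card_fin] at this
      omega
    obtain ⟨u, huX, hu⟩ := SetLike.exists_of_lt hlt
    exact α.vanishesOn_of_linearIndependent (by rw [hX, Fintype.card_fin]) (hsnoc_mem u huX)
      (linearIndependent_finSnoc.mpr ⟨hy, hu⟩) (hXker huX)

end AlternatingMap

theorem Submodule.exists_linearIndependent_span_eq_of_finrank_eq {m : ℕ} (Y : Submodule K V)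
    [Module.Finite K Y] (hY : finrank K Y = m) :
    ∃ y : Fin m → V, LinearIndependent K y ∧ span K (Set.range y) = Y := by
  let b := finBasisOfFinrankEq K Y hY
  refine ⟨Y.subtype ∘ b, b.linearIndependent.map' _ Y.ker_subtype, ?_⟩
  rw [Set.range_comp, ← map_span, b.span_eq, Submodule.map_top, range_subtype]

def grassmannLine (k : ℕ) (Y Z : Submodule K V) : Set (Submodule K V) :=
  {X | Y ≤ X ∧ X ≤ Z ∧ finrank K X = k}

theorem Submodule.finrank_inf_ker_add_one {φ : Dual K V} {Z : Submodule K V}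
    [FiniteDimensional K Z] (hZ : ¬ Z ≤ LinearMap.ker φ) :
    finrank K ↥(Z ⊓ LinearMap.ker φ) + 1 = finrank K Z := by
  have hne : φ.domRestrict Z ≠ 0 := fun h0 => hZ fun z hz => by
    simpa using LinearMap.congr_fun h0 ⟨z, hz⟩
  rw [← Dual.finrank_ker_add_one_of_ne_zero hne, LinearMap.ker_domRestrict,
    ← map_comap_subtype, finrank_map_subtype_eq]

theorem grassmannLine_inter_eq_singleton_or_subset (φ : Dual K V) {k : ℕ}
    {Y Z : Submodule K V} [FiniteDimensional K Z] (hYZ : Y ≤ Z) (hYφ : Y ≤ LinearMap.ker φ)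
    (hZ : finrank K Z = k + 1) {H : Set (Submodule K V)}
    (hH : ∀ X ∈ grassmannLine k Y Z, X ∈ H ↔ X ≤ LinearMap.ker φ) :
    (∃ X₀, grassmannLine k Y Z ∩ H = {X₀}) ∨ grassmannLine k Y Z ⊆ H := by
  by_cases hZφ : Z ≤ LinearMap.ker φ
  · exact .inr fun X hX => (hH X hX).mpr (hX.2.1.trans hZφ)
  have hX₀ : finrank K ↥(Z ⊓ LinearMap.ker φ) = k := by
    have := Submodule.finrank_inf_ker_add_one hZφ
    omega
  have hX₀_mem : Z ⊓ LinearMap.ker φ ∈ grassmannLine k Y Z :=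
    ⟨le_inf hYZ hYφ, inf_le_left, hX₀⟩
  refine .inl ⟨Z ⊓ LinearMap.ker φ, Set.eq_singleton_iff_unique_mem.mpr ⟨?_, ?_⟩⟩
  · exact ⟨hX₀_mem, (hH _ hX₀_mem).mpr inf_le_right⟩
  · rintro X ⟨hX, hXH⟩
    exact eq_of_le_of_finrank_eq (le_inf hX.2.1 ((hH X hX).mp hXH)) (hX.2.2.trans hX₀.symm)

end

theorem stmt_1_general (K V : Type*) [Field K] [AddCommGroup V] [Module K V] [FiniteDimensional K V]
    (k : ℕ) (hk : 2 ≤ k)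
    (f : Module.Dual K (⋀[K]^k V)) (hf : f ≠ 0)
    (α : AlternatingMap K V K (Fin k))
    (hα : ∀ v : Fin k → V, α v = f (wedge K k v))
    (H : Set (Submodule K V))
    (hH : H = {X : Submodule K V | finrank K X = k ∧ ∀ v : Fin k → V, (∀ i, v i ∈ X) → α v = 0}) :
    (∀ Y Z : Submodule K V, finrank K Y = k - 1 → finrank K Z = k + 1 → Y ≤ Z →
      ((∃ X₀ : Submodule K V,
          {X : Submodule K V | Y ≤ X ∧ X ≤ Z ∧ finrank K X = k} ∩ H = {X₀}) ∨
        {X : Submodule K V | Y ≤ X ∧ X ≤ Z ∧ finrank K X = k} ⊆ H)) ∧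
    (∃ X : Submodule K V, finrank K X = k ∧ X ∉ H) := by
  change H = {X : Submodule K V | finrank K X = k ∧ α.VanishesOn X} at hH
  subst hH
  refine ⟨fun Y Z hY hZ hYZ => ?_, ?_⟩
  · obtain ⟨m, rfl⟩ : ∃ m, k = m + 1 := ⟨k - 1, by omega⟩
    obtain ⟨y, hy, rfl⟩ := Y.exists_linearIndependent_span_eq_of_finrank_eq hY
    exact grassmannLine_inter_eq_singleton_or_subset _ hYZ
      (fun u hu => α.curryRight_apply_eq_zero_of_mem_span hu) hZ
      fun X hX =>
        (and_iff_right hX.2.2).trans (α.vanishesOn_iff_le_ker_curryRight hy hX.1 hX.2.2)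
  · have hα0 : α ≠ 0 := by
      rintro rfl
      refine hf (exteriorPower.linearMap_ext ?_)
      ext v
      exact (hα v).symm
    obtain ⟨X, hX, hXα⟩ := α.exists_finrank_eq_not_vanishesOn hα0
    exact ⟨X, hX.trans (Fintype.card_fin k), fun h => hXα h.2⟩

/-- For a nonzero linear functional `f` on `⋀^k V` with associated alternating form `α`,
the set `H_f` of `k`-subspaces on which `α` vanishes meets every line `ℓ_{Y,Z}` of the
`k`-Grassmannian in a single point or the whole line, and is a proper subset of the set of
`k`-subspaces. -/
theorem stmt_1 (K V : Type*) [Field K] [AddCommGroup V] [Module K V] [FiniteDimensional K V]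
    (n k : ℕ) (hn : finrank K V = n) (hk : 2 ≤ k) (hkn : k < n)
    (f : Module.Dual K (⋀[K]^k V)) (hf : f ≠ 0)
    (α : AlternatingMap K V K (Fin k))
    (hα : ∀ v : Fin k → V, α v = f (wedge K k v))
    (H : Set (Submodule K V))
    (hH : H = {X : Submodule K V | finrank K X = k ∧ ∀ v : Fin k → V, (∀ i, v i ∈ X) → α v = 0}) :
    (∀ Y Z : Submodule K V, finrank K Y = k - 1 → finrank K Z = k + 1 → Y ≤ Z →
      ((∃ X₀ : Submodule K V,
          {X : Submodule K V | Y ≤ X ∧ X ≤ Z ∧ finrank K X = k} ∩ H = {X₀}) ∨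
        {X : Submodule K V | Y ≤ X ∧ X ≤ Z ∧ finrank K X = k} ⊆ H)) ∧
    (∃ X : Submodule K V, finrank K X = k ∧ X ∉ H) :=
  stmt_1_general K V k hk f hf α hα H hH
end

section
/- Let α be a nontrivial alternating k-linear form on V defining a hyperplane H of the k-Grassmannian. Then the radical Rad(α) = {v ∈ V : α(x₁,…,x_{k−1},v) = 0 for all x₁,…,x_{k−1} ∈ V} has codimension at least k in V. -/
/-!
Choose `x` with `α x ≠ 0`; its entries are linearly independent and span a `k`-dimensional
subspace `W`. Expanding `v = ∑ cⱼ xⱼ ∈ W` in the `i`-th slot gives `α (x with xᵢ replaced by v) = cᵢ α x`,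
and for `v ∈ Rad(α)` this vanishes in every slot since `α` is alternating. Hence `Rad(α) ∩ W = 0`.
-/

open Module Function

namespace AlternatingMap

theorem map_update_sum_smul_self {R M N ι : Type*} [CommSemiring R] [AddCommMonoid M]
    [Module R M] [AddCommMonoid N] [Module R N] [Fintype ι] [DecidableEq ι] (α : M [⋀^ι]→ₗ[R] N)
    (x : ι → M) (c : ι → R) (i : ι) :
    α (update x i (∑ j, c j • x j)) = c i • α x := by
  rw [α.map_update_sum, Finset.sum_eq_single i]
  · rw [α.map_update_smul, update_eq_self]
  · intro j _ hji
    rw [α.map_update_smul, α.map_update_self _ hji.symm, smul_zero]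
  · exact fun h => absurd (Finset.mem_univ i) h

theorem map_update_eq_zero_of_forall_map_snoc_eq_zero {R M N : Type*} [CommSemiring R]
    [AddCommMonoid M] [Module R M] [AddCommGroup N] [Module R N] {m : ℕ}
    (α : M [⋀^Fin (m + 1)]→ₗ[R] N) {v : M} (hv : ∀ w : Fin m → M, α (Fin.snoc w v) = 0)
    (y : Fin (m + 1) → M) (i : Fin (m + 1)) : α (update y i v) = 0 := by
  have h_last : ∀ z : Fin (m + 1) → M, α (update z (Fin.last m) v) = 0 := fun z => by
    rw [← Fin.snoc_init_self z, Fin.update_snoc_last]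
    exact hv _
  rcases eq_or_ne i (Fin.last m) with rfl | hi
  · exact h_last y
  · rw [← neg_eq_zero, ← α.map_swap _ hi, update_comp_equiv, Equiv.symm_swap,
      Equiv.swap_apply_left]
    exact h_last _

theorem eq_zero_of_mem_span_of_forall_map_update_eq_zero {K M N ι : Type*} [Field K]
    [AddCommGroup M] [Module K M] [AddCommGroup N] [Module K N] [Fintype ι] [DecidableEq ι]
    (α : M [⋀^ι]→ₗ[K] N) {x : ι → M} (hx : α x ≠ 0) {v : M}
    (hv_span : v ∈ Submodule.span K (Set.range x)) (hv : ∀ i, α (update x i v) = 0) : v = 0 := by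
  obtain ⟨c, rfl⟩ := (Submodule.mem_span_range_iff_exists_fun K).1 hv_span
  have hc : ∀ i, c i = 0 := fun i => by
    have := hv i
    rw [α.map_update_sum_smul_self] at this
    exact (smul_eq_zero.1 this).resolve_right hx
  simp [hc]

end AlternatingMap

theorem stmt_4_general (K V : Type*) [Field K] [AddCommGroup V] [Module K V] [FiniteDimensional K V]
    (n m : ℕ) (hn : finrank K V = n)
    (α : AlternatingMap K V K (Fin (m + 1))) (hα : α ≠ 0)
    (Rad : Submodule K V)
    (hRad : ∀ x : V, x ∈ Rad ↔ ∀ v : Fin m → V, α (Fin.snoc v x) = 0) :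
    finrank K Rad + (m + 1) ≤ n := by
  obtain ⟨x, hx⟩ := DFunLike.ne_iff.1 hα
  have hx_li : LinearIndependent K x := by_contra fun h => hx (α.map_linearDependent x h)
  have h_disjoint : Disjoint Rad (Submodule.span K (Set.range x)) := by
    rw [Submodule.disjoint_def]
    intro v hv_rad hv_span
    exact α.eq_zero_of_mem_span_of_forall_map_update_eq_zero hx hv_span
      (α.map_update_eq_zero_of_forall_map_snoc_eq_zero ((hRad v).1 hv_rad) x)
  have h_span := Submodule.finrank_add_finrank_le_of_disjoint h_disjoint
  rwa [finrank_span_eq_card hx_li, Fintype.card_fin, hn] at h_span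

/-- The radical of a nontrivial alternating `k`-linear form (`k = m + 1`, `2 ≤ k < n`) has
codimension at least `k` in `V`. -/
theorem stmt_4 (K V : Type*) [Field K] [AddCommGroup V] [Module K V] [FiniteDimensional K V]
    (n m : ℕ) (hn : finrank K V = n) (hk : 2 ≤ m + 1) (hkn : m + 1 < n)
    (α : AlternatingMap K V K (Fin (m + 1))) (hα : α ≠ 0)
    (Rad : Submodule K V)
    (hRad : ∀ x : V, x ∈ Rad ↔ ∀ v : Fin m → V, α (Fin.snoc v x) = 0) :
    finrank K Rad + (m + 1) ≤ n :=
  stmt_4_general K V n m hn α hα Rad hRad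
end

section
/- A hyperplane H of the k-Grassmannian of V is trivial (i.e., equals {X : dim X = k, X ∩ R ≠ 0} for some subspace R of codimension k) if and only if the radical of its defining alternating k-linear form has codimension exactly k in V. -/
/-!
An alternating `(m+1)`-form vanishes as soon as one argument lies in its radical `Rad`. Hence it
vanishes on every `(m+1)`-space meeting `Rad`, which forces `codim Rad ≥ m + 1` when `φ ≠ 0`,
and it is determined by its values on any complement of `Rad`, so when `codim Rad = m + 1` it
vanishes on an `(m+1)`-space `X` exactly when `X ∩ Rad ≠ 0`. Conversely, if `φ` vanishes exactly
on the `(m+1)`-spaces meeting `R'`, then every `r ∈ R'` lies in `Rad`, so `R' ≤ Rad`.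
-/

open Module Submodule

namespace AlternatingMap

section CommRing

variable {R M N : Type*} [CommRing R] [AddCommGroup M] [Module R M] [AddCommGroup N] [Module R N]
  {m : ℕ} (φ : M [⋀^Fin (m + 1)]→ₗ[R] N) {S : Submodule R M}

theorem map_eq_zero_of_apply_mem (hS : ∀ x ∈ S, ∀ v : Fin m → M, φ (Fin.snoc v x) = 0)
    (v : Fin (m + 1) → M) {j : Fin (m + 1)} (hj : v j ∈ S) : φ v = 0 := by
  have hswap : φ (v ∘ Equiv.swap j (Fin.last m)) = 0 := by
    rw [← Fin.snoc_init_self (v ∘ _)]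
    exact hS _ (by simpa using hj) _
  rw [φ.map_perm] at hswap
  exact (smul_eq_zero_iff_eq _).mp hswap

theorem map_update_sum_smul {ι : Type*} [Fintype ι] [DecidableEq ι] (f : M [⋀^ι]→ₗ[R] N)
    (v : ι → M) (c : ι → R) (j : ι) :
    f (Function.update v j (∑ i, c i • v i)) = c j • f v := by
  rw [f.map_update_sum, Finset.sum_eq_single j]
  · rw [f.map_update_smul, Function.update_eq_self]
  · intro i _ hij
    rw [f.map_update_smul, f.map_update_self v hij.symm, smul_zero]
  · simp

/-- Expanding each argument along `M = X ⊕ S`, every term except the one with all arguments in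
`X` has an argument in `S`. -/
theorem eq_zero_of_sup_eq_top (hS : ∀ x ∈ S, ∀ v : Fin m → M, φ (Fin.snoc v x) = 0)
    {X : Submodule R M} (hXS : X ⊔ S = ⊤)
    (hX : ∀ v : Fin (m + 1) → M, (∀ i, v i ∈ X) → φ v = 0) : φ = 0 := by
  ext u
  have hdec (i : Fin (m + 1)) : ∃ x ∈ X, ∃ s ∈ S, x + s = u i :=
    mem_sup.mp (hXS ▸ mem_top)
  choose x hx s hs hxs using hdec
  rw [show u = x + s from funext fun i => (hxs i).symm, φ.map_add_univ]
  refine Finset.sum_eq_zero fun t _ => ?_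
  by_cases ht : ∀ i, i ∈ t
  · rw [Finset.eq_univ_of_forall ht, Finset.piecewise_univ]
    exact hX x hx
  · obtain ⟨i, hi⟩ := not_forall.mp ht
    refine φ.map_eq_zero_of_apply_mem hS _ (j := i) ?_
    rw [Finset.piecewise_eq_of_notMem _ _ _ hi]
    exact hs i

end CommRing

section Field

variable {K M N : Type*} [Field K] [AddCommGroup M] [Module K M] [AddCommGroup N] [Module K N]
  {m : ℕ} (φ : M [⋀^Fin (m + 1)]→ₗ[K] N) {S : Submodule K M}

theorem map_eq_zero_of_inf_ne_bot (hS : ∀ x ∈ S, ∀ v : Fin m → M, φ (Fin.snoc v x) = 0)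
    {X : Submodule K M} (hX : finrank K X = m + 1) (hXS : X ⊓ S ≠ ⊥)
    {v : Fin (m + 1) → M} (hv : ∀ i, v i ∈ X) : φ v = 0 := by
  by_cases hli : LinearIndependent K v
  swap
  · exact φ.map_linearDependent v hli
  have : FiniteDimensional K X := Module.finite_of_finrank_pos (hX ▸ m.succ_pos)
  have hspan : span K (Set.range v) = X :=
    eq_of_le_of_finrank_eq (span_le.mpr (Set.range_subset_iff.mpr hv))
      (by simpa [hX] using finrank_span_eq_card hli)
  obtain ⟨x, hxXS, hx0⟩ := (Submodule.ne_bot_iff _).mp hXS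
  obtain ⟨c, rfl⟩ := (mem_span_range_iff_exists_fun K).mp (hspan ▸ (mem_inf.mp hxXS).1)
  obtain ⟨j, hj⟩ : ∃ j, c j ≠ 0 := by
    by_contra! hc
    simp [hc] at hx0
  have hupdate := φ.map_eq_zero_of_apply_mem hS (Function.update v j (∑ i, c i • v i)) (j := j)
    (by simpa using (mem_inf.mp hxXS).2)
  rw [map_update_sum_smul] at hupdate
  exact (smul_eq_zero.mp hupdate).resolve_left hj

theorem finrank_add_le_of_ne_zero [FiniteDimensional K M] (hφ : φ ≠ 0)
    (hS : ∀ x ∈ S, ∀ v : Fin m → M, φ (Fin.snoc v x) = 0) :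
    finrank K S + (m + 1) ≤ finrank K M := by
  by_contra! hdim
  refine hφ (ext fun v => ?_)
  by_cases hli : LinearIndependent K v
  swap
  · exact φ.map_linearDependent v hli
  have hX : finrank K (span K (Set.range v)) = m + 1 := by
    simpa using finrank_span_eq_card hli
  have hXS : span K (Set.range v) ⊓ S ≠ ⊥ := fun hbot => by
    have := finrank_add_finrank_le_of_disjoint (disjoint_iff.mpr hbot)
    omega
  exact φ.map_eq_zero_of_inf_ne_bot hS hX hXS fun i => subset_span ⟨i, rfl⟩

theorem apply_snoc_eq_zero_of_forall_inf_ne_bot {T : Submodule K M}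
    (hT : ∀ X : Submodule K M, finrank K X = m + 1 → X ⊓ T ≠ ⊥ →
      ∀ v : Fin (m + 1) → M, (∀ i, v i ∈ X) → φ v = 0)
    {r : M} (hr : r ∈ T) (v : Fin m → M) : φ (Fin.snoc v r) = 0 := by
  by_cases hli : LinearIndependent K (Fin.snoc v r : Fin (m + 1) → M)
  swap
  · exact φ.map_linearDependent _ hli
  have hrX : r ∈ span K (Set.range (Fin.snoc v r : Fin (m + 1) → M)) :=
    subset_span ⟨Fin.last m, Fin.snoc_last _ _⟩
  have hr0 : r ≠ 0 := by simpa using hli.ne_zero (Fin.last m)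
  have hXT : span K (Set.range (Fin.snoc v r : Fin (m + 1) → M)) ⊓ T ≠ ⊥ :=
    (Submodule.ne_bot_iff _).mpr ⟨r, mem_inf.mpr ⟨hrX, hr⟩, hr0⟩
  exact hT _ (by simpa using finrank_span_eq_card hli) hXT _ fun i => subset_span ⟨i, rfl⟩

end Field

end AlternatingMap

theorem stmt_10_general (K V : Type*) [Field K] [AddCommGroup V] [Module K V] [FiniteDimensional K V]
    (n m : ℕ) (hn : finrank K V = n)
    (φ : AlternatingMap K V K (Fin (m + 1))) (hφ : φ ≠ 0)
    (Rad : Submodule K V)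
    (hRad : ∀ x : V, x ∈ Rad ↔ ∀ v : Fin m → V, φ (Fin.snoc v x) = 0) :
    (∃ R' : Submodule K V, finrank K R' + (m + 1) = n ∧
        ∀ X : Submodule K V, finrank K X = m + 1 →
          ((∀ v : Fin (m + 1) → V, (∀ i, v i ∈ X) → φ v = 0) ↔ X ⊓ R' ≠ ⊥)) ↔
      finrank K Rad + (m + 1) = n := by
  have hRad' : ∀ x ∈ Rad, ∀ v : Fin m → V, φ (Fin.snoc v x) = 0 := fun x => (hRad x).mp
  have hcodim := hn ▸ φ.finrank_add_le_of_ne_zero hφ hRad'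
  constructor
  · rintro ⟨R', hR', hvanish⟩
    have hle : R' ≤ Rad := fun r hr =>
      (hRad r).mpr (φ.apply_snoc_eq_zero_of_forall_inf_ne_bot (fun X hX => (hvanish X hX).mpr) hr)
    have := finrank_mono hle
    omega
  · intro hRadDim
    refine ⟨Rad, hRadDim, fun X hX => ⟨fun hvan hbot => hφ ?_,
      fun hXRad _ hv => φ.map_eq_zero_of_inf_ne_bot hRad' hX hXRad hv⟩⟩
    exact φ.eq_zero_of_sup_eq_top hRad'
      (eq_top_of_disjoint X Rad (by omega) (disjoint_iff.mpr hbot)) hvan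

/-- A hyperplane `H` of the `k`-Grassmannian (`k = m + 1 ≥ 3`) defined by a nontrivial
alternating `k`-form `φ` is trivial — i.e. equals `{X : dim X = k, X ∩ R' ≠ 0}` for some
subspace `R'` of codimension `k` — iff the radical of `φ` has codimension exactly `k`. -/
theorem stmt_10 (K V : Type*) [Field K] [AddCommGroup V] [Module K V] [FiniteDimensional K V]
    (n m : ℕ) (hn : finrank K V = n) (hm : 2 ≤ m) (hmn : m + 1 < n)
    (φ : AlternatingMap K V K (Fin (m + 1))) (hφ : φ ≠ 0)
    (Rad : Submodule K V)
    (hRad : ∀ x : V, x ∈ Rad ↔ ∀ v : Fin m → V, φ (Fin.snoc v x) = 0) :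
    (∃ R' : Submodule K V, finrank K R' + (m + 1) = n ∧
        ∀ X : Submodule K V, finrank K X = m + 1 →
          ((∀ v : Fin (m + 1) → V, (∀ i, v i ∈ X) → φ v = 0) ↔ X ⊓ R' ≠ ⊥)) ↔
      finrank K Rad + (m + 1) = n :=
  stmt_10_general K V n m hn φ hφ Rad hRad
end

section
/- Let V₀ be a hyperplane (codimension-1 subspace) of V and H₀ a hyperplane of the (k−1)-Grassmannian of V₀. Then the expansion E(H₀) = {X : dim X = k, and either X ⊆ V₀ or X ∩ V₀ ∈ H₀} is a hyperplane of the k-Grassmannian of V: it is a proper subset meeting every line ℓ_{Y,Z} of the k-Grassmannian in a single point or the whole line. -/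
open Module

/-- `H` is a hyperplane of the `k`-Grassmannian of the subspace `W` of `V`: all its members are
`k`-subspaces of `W`, it is proper, and it meets every line `ℓ_{Y,Z}` of the `k`-Grassmannian
of `W` in a single point or the whole line. -/
def IsGrassHyperplane {K V : Type*} [Field K] [AddCommGroup V] [Module K V]
    (W : Submodule K V) (k : ℕ) (H : Set (Submodule K V)) : Prop :=
  (∀ X ∈ H, X ≤ W ∧ finrank K X = k) ∧
  (∃ X : Submodule K V, X ≤ W ∧ finrank K X = k ∧ X ∉ H) ∧
  (∀ Y Z : Submodule K V, Z ≤ W → finrank K Y = k - 1 → finrank K Z = k + 1 → Y ≤ Z →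
    ({X : Submodule K V | Y ≤ X ∧ X ≤ Z ∧ finrank K X = k} ⊆ H ∨
      ∃ X₀ : Submodule K V,
        {X : Submodule K V | Y ≤ X ∧ X ≤ Z ∧ finrank K X = k} ∩ H = {X₀}))

/-!
If `Y ⊄ V₀`, then `X ↦ X ⊓ V₀` maps the line `ℓ_{Y,Z}` of the `k`-Grassmannian bijectively onto
the line `ℓ_{Y ⊓ V₀, Z ⊓ V₀}` of the `(k-1)`-Grassmannian of `V₀`, with inverse `W ↦ Y ⊔ W`
(both by the modular law), and it carries `E(H₀)` to `H₀`; so `E(H₀)` meets `ℓ_{Y,Z}` as `H₀`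
meets the image line. If `Y ≤ V₀` but `Z ⊄ V₀`, every point of `ℓ_{Y,Z}` other than `Z ⊓ V₀`
meets `V₀` in `Y`, so the line lies in `E(H₀)` when `Y ∈ H₀` and meets it only in `Z ⊓ V₀`
otherwise. Lines inside `V₀` lie in `E(H₀)`. Finally `A ⊔ span {v}`, for `A ∉ H₀` and `v ∉ V₀`,
is a `k`-space outside `E(H₀)`.
-/

def MeetsAllOrOne {α : Type*} (H L : Set α) : Prop :=
  L ⊆ H ∨ ∃ x, L ∩ H = {x}

theorem MeetsAllOrOne.of_bijOn {α β : Type*} {f : α → β} {L E : Set α} {L' H : Set β}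
    (hf : Set.BijOn f L L') (hE : ∀ x ∈ L, x ∈ E ↔ f x ∈ H) (h : MeetsAllOrOne H L') :
    MeetsAllOrOne E L := by
  rcases h with hsub | ⟨y, hy⟩
  · exact Or.inl fun x hx => (hE x hx).2 (hsub (hf.mapsTo hx))
  · have hyLH : y ∈ L' ∩ H := hy ▸ rfl
    obtain ⟨x₀, hx₀, rfl⟩ := hf.surjOn hyLH.1
    refine Or.inr ⟨x₀, Set.eq_singleton_iff_unique_mem.2 ⟨⟨hx₀, (hE x₀ hx₀).2 hyLH.2⟩, ?_⟩⟩
    rintro x ⟨hxL, hxE⟩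
    have hfx : f x ∈ L' ∩ H := ⟨hf.mapsTo hxL, (hE x hxL).1 hxE⟩
    exact hf.injOn hxL hx₀ (by rwa [hy] at hfx)

section ModularLattice

variable {α : Type*} [Lattice α] [IsModularLattice α]

theorem sup_inf_eq_of_le_of_sup_eq_top [OrderTop α] {y x c : α} (hyx : y ≤ x) (hyc : y ⊔ c = ⊤) :
    y ⊔ x ⊓ c = x := by
  rw [inf_comm, ← sup_inf_assoc_of_le c hyx, hyc, top_inf_eq]

theorem sup_inf_eq_of_inf_le {y w c : α} (hwc : w ≤ c) (hyc : y ⊓ c ≤ w) : (y ⊔ w) ⊓ c = w := by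
  rw [sup_comm, sup_inf_assoc_of_le y hwc, sup_eq_left.2 hyc]

end ModularLattice

namespace Submodule

variable {K V : Type*} [Field K] [AddCommGroup V] [Module K V]

def grassLine (Y Z : Submodule K V) (k : ℕ) : Set (Submodule K V) :=
  {X | Y ≤ X ∧ X ≤ Z ∧ finrank K X = k}

def expansion (V₀ : Submodule K V) (H₀ : Set (Submodule K V)) (k : ℕ) : Set (Submodule K V) :=
  {X | finrank K X = k ∧ (X ≤ V₀ ∨ X ⊓ V₀ ∈ H₀)}

variable [FiniteDimensional K V] {V₀ : Submodule K V} (hV₀ : finrank K V₀ + 1 = finrank K V)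
include hV₀

theorem sup_eq_top_of_finrank_add_one {X : Submodule K V} (hX : ¬ X ≤ V₀) : X ⊔ V₀ = ⊤ := by
  have hlt : finrank K V₀ < finrank K ↥(X ⊔ V₀) :=
    finrank_lt_finrank_of_lt (lt_of_le_of_ne le_sup_right fun h => hX (h ▸ le_sup_left))
  exact eq_top_of_finrank_eq (le_antisymm (finrank_le _) (by omega))

theorem finrank_inf_add_one_of_not_le {X : Submodule K V} (hX : ¬ X ≤ V₀) :
    finrank K ↥(X ⊓ V₀) + 1 = finrank K X := by
  have h := finrank_sup_add_finrank_inf_eq X V₀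
  rw [sup_eq_top_of_finrank_add_one hV₀ hX, finrank_top] at h
  omega

theorem bijOn_inf_grassLine {Y Z : Submodule K V} {k : ℕ} (hYV : ¬ Y ≤ V₀) (hYZ : Y ≤ Z)
    (hYk : finrank K Y = k - 1) :
    Set.BijOn (· ⊓ V₀) (grassLine Y Z k) (grassLine (Y ⊓ V₀) (Z ⊓ V₀) (k - 1)) := by
  have hY := finrank_inf_add_one_of_not_le hV₀ hYV
  have hYtop := sup_eq_top_of_finrank_add_one hV₀ hYV
  refine Set.InvOn.bijOn (f' := (Y ⊔ ·))
    ⟨fun X hX => sup_inf_eq_of_le_of_sup_eq_top hX.1 hYtop,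
      fun W hW => sup_inf_eq_of_inf_le (hW.2.1.trans inf_le_right) hW.1⟩ ?_ ?_
  · rintro X ⟨hYX, hXZ, hXk⟩
    have hX := finrank_inf_add_one_of_not_le hV₀ fun h => hYV (hYX.trans h)
    beta_reduce
    exact ⟨inf_le_inf_right V₀ hYX, inf_le_inf_right V₀ hXZ, by omega⟩
  · rintro W ⟨hYW, hWZ, hWk⟩
    have hYWV : (Y ⊔ W) ⊓ V₀ = W := sup_inf_eq_of_inf_le (hWZ.trans inf_le_right) hYW
    have h := finrank_inf_add_one_of_not_le (X := Y ⊔ W) hV₀ fun h => hYV (le_sup_left.trans h)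
    rw [hYWV] at h
    beta_reduce
    exact ⟨le_sup_left, sup_le hYZ (hWZ.trans inf_le_left), by omega⟩

theorem meetsAllOrOne_expansion_of_not_le {H₀ : Set (Submodule K V)} {Y Z : Submodule K V}
    {k : ℕ} (hYV : ¬ Y ≤ V₀) (hYZ : Y ≤ Z) (hYk : finrank K Y = k - 1)
    (hH₀ : MeetsAllOrOne H₀ (grassLine (Y ⊓ V₀) (Z ⊓ V₀) (k - 1))) :
    MeetsAllOrOne (expansion V₀ H₀ k) (grassLine Y Z k) := by
  refine hH₀.of_bijOn (bijOn_inf_grassLine hV₀ hYV hYZ hYk) fun X hX => ?_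
  have hXV : ¬ X ≤ V₀ := fun h => hYV (hX.1.trans h)
  simp [expansion, hX.2.2, hXV]

theorem meetsAllOrOne_expansion_of_le_of_not_le {H₀ : Set (Submodule K V)}
    {Y Z : Submodule K V} {k : ℕ} (hYV : Y ≤ V₀) (hZV : ¬ Z ≤ V₀) (hYZ : Y ≤ Z)
    (hYk : finrank K Y = k - 1) (hZk : finrank K Z = k + 1) :
    MeetsAllOrOne (expansion V₀ H₀ k) (grassLine Y Z k) := by
  have hZ := finrank_inf_add_one_of_not_le hV₀ hZV
  have eq_of_le : ∀ X ∈ grassLine Y Z k, X ≤ V₀ → X = Z ⊓ V₀ := fun X hX hXV =>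
    eq_of_le_of_finrank_eq (le_inf hX.2.1 hXV) (by rw [hX.2.2]; omega)
  have inf_eq_of_not_le : ∀ X ∈ grassLine Y Z k, ¬ X ≤ V₀ → X ⊓ V₀ = Y := fun X hX hXV => by
    have hXinf := finrank_inf_add_one_of_not_le hV₀ hXV
    exact (eq_of_le_of_finrank_eq (le_inf hX.1 hYV) (by rw [hX.2.2] at hXinf; omega)).symm
  by_cases hYH : Y ∈ H₀
  · refine Or.inl fun X hX => ⟨hX.2.2, (em (X ≤ V₀)).imp id fun hXV => ?_⟩
    rwa [inf_eq_of_not_le X hX hXV]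
  · have hZV₀ : Z ⊓ V₀ ∈ grassLine Y Z k ∩ expansion V₀ H₀ k :=
      ⟨⟨le_inf hYZ hYV, inf_le_left, by omega⟩, by omega, Or.inl inf_le_right⟩
    refine Or.inr ⟨Z ⊓ V₀, Set.eq_singleton_iff_unique_mem.2 ⟨hZV₀, ?_⟩⟩
    rintro X ⟨hX, -, hXE⟩
    refine eq_of_le X hX (by_contra fun hXV => hYH ?_)
    rw [← inf_eq_of_not_le X hX hXV]
    exact hXE.resolve_left hXV

theorem exists_finrank_eq_notMem_expansion {H₀ : Set (Submodule K V)} {A : Submodule K V}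
    {k : ℕ} (hk : 1 ≤ k) (hAV : A ≤ V₀) (hAk : finrank K A = k - 1) (hAH : A ∉ H₀) :
    ∃ X : Submodule K V, finrank K X = k ∧ X ∉ expansion V₀ H₀ k := by
  have hV₀top : V₀ < ⊤ := lt_top_iff_ne_top.2 fun h => by
    rw [h, finrank_top] at hV₀
    omega
  obtain ⟨v, -, hv⟩ := SetLike.exists_of_lt hV₀top
  have hXV : ¬ K ∙ v ⊔ A ≤ V₀ := fun h => hv (h (mem_sup_left (mem_span_singleton_self v)))
  have hXA : (K ∙ v ⊔ A) ⊓ V₀ = A := sup_inf_eq_of_inf_le hAV <| by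
    rw [(disjoint_span_singleton.2 fun h => absurd h hv).symm.eq_bot]
    exact bot_le
  have hX := finrank_inf_add_one_of_not_le hV₀ hXV
  rw [hXA] at hX
  refine ⟨K ∙ v ⊔ A, by omega, fun hE => ?_⟩
  rcases hE.2 with h | h
  · exact hXV h
  · exact hAH (hXA ▸ h)

end Submodule

open Submodule in
theorem stmt_11_general (K V : Type*) [Field K] [AddCommGroup V] [Module K V] [FiniteDimensional K V]
    (n k : ℕ) (hn : finrank K V = n) (hk : 3 ≤ k)
    (V₀ : Submodule K V) (hV₀ : finrank K V₀ + 1 = n)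
    (H₀ : Set (Submodule K V)) (hH₀ : IsGrassHyperplane V₀ (k - 1) H₀) :
    IsGrassHyperplane (⊤ : Submodule K V) k
      {X : Submodule K V | finrank K X = k ∧ (X ≤ V₀ ∨ X ⊓ V₀ ∈ H₀)} := by
  have hV : finrank K V₀ + 1 = finrank K V := hV₀.trans hn.symm
  obtain ⟨-, ⟨A, hAV, hAk, hAH⟩, hH₀line⟩ := hH₀
  refine ⟨fun X hX => ⟨le_top, hX.1⟩, ?_, fun Y Z _ hYk hZk hYZ => ?_⟩
  · obtain ⟨X, hXk, hX⟩ := exists_finrank_eq_notMem_expansion hV (by omega) hAV hAk hAH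
    exact ⟨X, le_top, hXk, hX⟩
  change MeetsAllOrOne (expansion V₀ H₀ k) (grassLine Y Z k)
  by_cases hZV : Z ≤ V₀
  · exact Or.inl fun X hX => ⟨hX.2.2, Or.inl (hX.2.1.trans hZV)⟩
  by_cases hYV : Y ≤ V₀
  · exact meetsAllOrOne_expansion_of_le_of_not_le hV hYV hZV hYZ hYk hZk
  have hY := finrank_inf_add_one_of_not_le hV hYV
  have hZ := finrank_inf_add_one_of_not_le hV hZV
  exact meetsAllOrOne_expansion_of_not_le hV hYV hYZ hYk
    (hH₀line _ _ inf_le_right (by omega) (by omega) (inf_le_inf_right V₀ hYZ))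

/-- The expansion `E(H₀) = {X : dim X = k, X ⊆ V₀ or X ∩ V₀ ∈ H₀}` of a hyperplane `H₀` of the
`(k-1)`-Grassmannian of a hyperplane `V₀` of `V` is a hyperplane of the `k`-Grassmannian of
`V`. -/
theorem stmt_11 (K V : Type*) [Field K] [AddCommGroup V] [Module K V] [FiniteDimensional K V]
    (n k : ℕ) (hn : finrank K V = n) (hn4 : 4 ≤ n) (hk : 3 ≤ k) (hkn : k < n)
    (V₀ : Submodule K V) (hV₀ : finrank K V₀ + 1 = n)
    (H₀ : Set (Submodule K V)) (hH₀ : IsGrassHyperplane V₀ (k - 1) H₀) :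
    IsGrassHyperplane (⊤ : Submodule K V) k
      {X : Submodule K V | finrank K X = k ∧ (X ≤ V₀ ∨ X ⊓ V₀ ∈ H₀)} :=
  stmt_11_general K V n k hn hk V₀ hV₀ H₀ hH₀
end

section
/- Let dim V = n, k = 3, and let H be a hyperplane of the 3-Grassmannian defined by f ∈ (⋀³V)*. Let t ≤ (n−2)/2 be a non-negative integer and suppose the depth δ(H) < n−1−2t (i.e., for every 1-subspace p, the radical of the symplectic form f_p(x,y) = f(v∧x∧y) on V/p, where p = ⟨v⟩, has rank less than n−1−2t). Then for every subspace W of V of dimension n−t, the induced map f̃_W : ⋀²W → W*, f̃_W(x∧y)(w) = f(x∧y∧w), is surjective. -/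
/-!
If `f̃_W` is not surjective, some nonzero `w ∈ W` is annihilated by its whole image, i.e.
`φ(w, x, y) = 0` for all `x, y ∈ W`: the subspace `W` is totally isotropic for the alternating
form `φ(w, ·, ·)`. A totally isotropic subspace of dimension `n - t` forces the radical of that
form to have dimension at least `(n - t) - t = n - 2t`, against the depth bound.
-/

open Module

namespace AlternatingMap

variable {R M N : Type*} [CommRing R] [AddCommGroup M] [Module R M] [AddCommGroup N] [Module R N]

def toBilinear (ψ : M [⋀^Fin 2]→ₗ[R] N) : M →ₗ[R] M →ₗ[R] N :=
  LinearMap.mk₂ R (fun x y => ψ ![x, y])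
    (fun _ _ _ => ψ.map_vecCons_add _ _ _) (fun _ _ _ => ψ.map_vecCons_smul _ _ _)
    (fun x _ _ => (ψ.curryLeft x).map_vecCons_add _ _ _)
    (fun _ x _ => (ψ.curryLeft x).map_vecCons_smul _ _ _)

@[simp]
theorem toBilinear_apply (ψ : M [⋀^Fin 2]→ₗ[R] N) (x y : M) : ψ.toBilinear x y = ψ ![x, y] :=
  rfl

theorem map_vecCons_rotate (φ : M [⋀^Fin 3]→ₗ[R] N) (a b c : M) :
    φ ![b, c, a] = φ ![a, b, c] := by
  have hrot : ![b, c, a] = ![a, b, c] ∘ finRotate 3 := by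
    funext i; fin_cases i <;> rfl
  rw [hrot, φ.map_perm, sign_finRotate]
  simp

end AlternatingMap

section FiniteDimensional

variable {K V : Type*} [Field K] [AddCommGroup V] [Module K V] [FiniteDimensional K V]

theorem Subspace.exists_ne_zero_forall_apply_eq_zero_of_ne_top
    {U : Subspace K (Dual K V)} (hU : U ≠ ⊤) : ∃ v : V, v ≠ 0 ∧ ∀ g ∈ U, g v = 0 := by
  have hco : U.dualCoannihilator ≠ ⊥ := by
    intro h
    apply hU
    rw [← Subspace.dualCoannihilator_dualAnnihilator_eq (W := U), h,
      Submodule.dualAnnihilator_bot]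
  obtain ⟨v, hv, hv0⟩ := Submodule.exists_mem_ne_zero_of_ne_bot hco
  exact ⟨v, hv0, (Submodule.mem_dualCoannihilator v).mp hv⟩

theorem LinearMap.exists_ne_zero_forall_apply_eq_zero_of_not_surjective {M : Type*}
    [AddCommGroup M] [Module K M] {F : M →ₗ[K] Dual K V} (hF : ¬Function.Surjective F) :
    ∃ v : V, v ≠ 0 ∧ ∀ m, F m v = 0 := by
  obtain ⟨v, hv0, hv⟩ := Subspace.exists_ne_zero_forall_apply_eq_zero_of_ne_top
    (mt LinearMap.range_eq_top.mp hF)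
  exact ⟨v, hv0, fun m => hv _ (LinearMap.mem_range_self F m)⟩

/-- The map `x ↦ B x` sends `W` into its annihilator, of dimension `dim V - dim W`, with kernel
inside the radical `ker B`. -/
theorem LinearMap.finrank_add_finrank_le_finrank_add_finrank_ker (B : V →ₗ[K] Dual K V)
    {W : Submodule K V} (hW : ∀ x ∈ W, ∀ y ∈ W, B x y = 0) :
    finrank K W + finrank K W ≤ finrank K V + finrank K (LinearMap.ker B) := by
  set g := B.domRestrict W
  have hrange : LinearMap.range g ≤ W.dualAnnihilator := by
    rintro - ⟨x, rfl⟩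
    exact (Submodule.mem_dualAnnihilator _).mpr (hW x x.2)
  have hker : (LinearMap.ker g).map W.subtype ≤ LinearMap.ker B := by
    rintro - ⟨x, hx, rfl⟩
    exact hx
  have h₁ := Submodule.finrank_mono hrange
  have h₂ := Submodule.finrank_mono hker
  rw [Submodule.finrank_map_subtype_eq] at h₂
  have h₃ := g.finrank_range_add_finrank_ker
  have h₄ := Subspace.finrank_add_finrank_dualAnnihilator_eq W
  omega

end FiniteDimensional

theorem stmt_16_general (K V : Type*) [Field K] [AddCommGroup V] [Module K V] [FiniteDimensional K V]
    (n t : ℕ) (hn : finrank K V = n)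
    (φ : AlternatingMap K V K (Fin 3))
    (hdepth : ∀ v : V, v ≠ 0 → ∀ Rv : Submodule K V,
      (∀ x : V, x ∈ Rv ↔ ∀ y : V, φ ![v, x, y] = 0) → finrank K Rv < n - 2 * t)
    (W : Submodule K V) (hW : finrank K W = n - t)
    (FW : (⋀[K]^2 W) →ₗ[K] Module.Dual K W)
    (hFW : ∀ x y w : W, FW (wedge K 2 ![x, y]) w = φ ![(x : V), (y : V), (w : V)]) :
    Function.Surjective FW := by
  by_contra hsurj
  obtain ⟨w, hw0, hw⟩ := LinearMap.exists_ne_zero_forall_apply_eq_zero_of_not_surjective hsurj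
  set B := (φ.curryLeft (w : V)).toBilinear
  have hiso : ∀ x ∈ W, ∀ y ∈ W, B x y = 0 := fun x hx y hy => by
    rw [AlternatingMap.toBilinear_apply, AlternatingMap.curryLeft_apply_apply,
      ← AlternatingMap.map_vecCons_rotate, ← hFW ⟨x, hx⟩ ⟨y, hy⟩]
    exact hw _
  have hrad := B.finrank_add_finrank_le_finrank_add_finrank_ker hiso
  have hsmall := hdepth w (by simpa using hw0) (LinearMap.ker B) fun x => by
    simp [B, LinearMap.ext_iff]
  omega

/-- Let `H` be the hyperplane of the 3-Grassmannian defined by `f ∈ (⋀³V)*` (with associated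
alternating form `φ`), `t ≤ (n-2)/2`, and suppose `δ(H) < n - 1 - 2t`, i.e. for every nonzero
`v` the radical `{x : ∀ y, φ(v,x,y) = 0}` (which contains `v`) has dimension `< n - 2t`.
Then for every subspace `W` of dimension `n - t`, the induced map
`f̃_W : ⋀²W → W*`, `f̃_W(x∧y)(w) = φ(x,y,w)`, is surjective. -/
theorem stmt_16 (K V : Type*) [Field K] [AddCommGroup V] [Module K V] [FiniteDimensional K V]
    (n t : ℕ) (hn : finrank K V = n) (hn5 : 5 ≤ n) (ht : 2 * t ≤ n - 2)
    (f : Module.Dual K (⋀[K]^3 V)) (hf : f ≠ 0)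
    (φ : AlternatingMap K V K (Fin 3))
    (hφ : ∀ v : Fin 3 → V, φ v = f (wedge K 3 v))
    (hdepth : ∀ v : V, v ≠ 0 → ∀ Rv : Submodule K V,
      (∀ x : V, x ∈ Rv ↔ ∀ y : V, φ ![v, x, y] = 0) → finrank K Rv < n - 2 * t)
    (W : Submodule K V) (hW : finrank K W = n - t)
    (FW : (⋀[K]^2 W) →ₗ[K] Module.Dual K W)
    (hFW : ∀ x y w : W, FW (wedge K 2 ![x, y]) w = φ ![(x : V), (y : V), (w : V)]) :
    Function.Surjective FW :=
  stmt_16_general K V n t hn φ hdepth W hW FW hFW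
end

section
/- Let dim V = n, f ∈ (⋀³V)* nonzero defining hyperplane H with kernel K(H) = ker(f̃) ⊆ ⋀²V, where f̃(ω)(x) = f(ω∧x). Let t ≤ (n−2)/2 and suppose δ(H) < n−1−2t. Then for any subspace W of V with dim W = n−t, letting K(H(W)) = ker of the analogous map ⋀²W → W*, one has dim( K(H(W)) / (K(H) ∩ K(H(W))) ) ≤ t. -/
open Module

section

variable {K V : Type*} [Field K] [AddCommGroup V] [Module K V]

lemma wedge_two_eq_vecCons (v : Fin 2 → V) : wedge K 2 v = wedge K 2 ![v 0, v 1] := by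
  congr 1
  ext i
  fin_cases i <;> rfl

lemma Submodule.dualRestrict_comp_eq_of_wedge {W : Submodule K V} {k : ℕ}
    (G : ⋀[K]^k W →ₗ[K] Dual K V) (FW : ⋀[K]^k W →ₗ[K] Dual K W)
    (h : ∀ (v : Fin k → W) (w : W), G (wedge K k v) w = FW (wedge K k v) w) :
    W.dualRestrict ∘ₗ G = FW := by
  ext v w
  exact h v w

lemma Submodule.finrank_le_finrank_inf_ker_add [FiniteDimensional K V]
    {N : Type*} [AddCommGroup N] [Module K N] (g : V →ₗ[K] N) {p : Submodule K V}
    {A : Submodule K N} [FiniteDimensional K A] (hpA : p.map g ≤ A) :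
    finrank K p ≤ finrank K (p ⊓ LinearMap.ker g : Submodule K V) + finrank K A := by
  have hker : finrank K (LinearMap.ker (g ∘ₗ p.subtype)) = finrank K (p ⊓ LinearMap.ker g :
      Submodule K V) := by
    rw [LinearMap.ker_comp, ← Submodule.finrank_map_subtype_eq, Submodule.map_comap_subtype]
  have hrange : finrank K (LinearMap.range (g ∘ₗ p.subtype)) ≤ finrank K A := by
    rw [LinearMap.range_comp, Submodule.range_subtype]
    exact Submodule.finrank_mono hpA
  have := (g ∘ₗ p.subtype).finrank_range_add_finrank_ker
  omega

end

theorem stmt_17_general (K V : Type*) [Field K] [AddCommGroup V] [Module K V] [FiniteDimensional K V]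
    (n t : ℕ) (hn : finrank K V = n)
    (φ : AlternatingMap K V K (Fin 3))
    (F : (⋀[K]^2 V) →ₗ[K] Module.Dual K V)
    (hF : ∀ x y z : V, F (wedge K 2 ![x, y]) z = φ ![x, y, z])
    (W : Submodule K V) (hW : finrank K W = n - t)
    (FW : (⋀[K]^2 W) →ₗ[K] Module.Dual K W)
    (hFW : ∀ x y w : W, FW (wedge K 2 ![x, y]) w = φ ![(x : V), (y : V), (w : V)])
    (j : (⋀[K]^2 W) →ₗ[K] (⋀[K]^2 V))
    (hj : ∀ v : Fin 2 → W, j (wedge K 2 v) = wedge K 2 (fun i => (v i : V))) :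
    finrank K (LinearMap.ker FW) ≤
      finrank K (LinearMap.ker FW ⊓ Submodule.comap j (LinearMap.ker F) :
        Submodule K (⋀[K]^2 W)) + t := by
  have hres : W.dualRestrict ∘ₗ F ∘ₗ j = FW :=
    W.dualRestrict_comp_eq_of_wedge _ _ fun v w => by
      rw [LinearMap.comp_apply, hj, wedge_two_eq_vecCons, hF, wedge_two_eq_vecCons v, hFW]
  have hmaps : (LinearMap.ker FW).map (F ∘ₗ j) ≤ W.dualAnnihilator := by
    rintro _ ⟨ω, hω, rfl⟩
    rwa [← Submodule.dualRestrict_ker_eq_dualAnnihilator, LinearMap.mem_ker,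
      ← LinearMap.comp_apply, hres]
  have hann : finrank K W.dualAnnihilator ≤ t := by
    have := Subspace.finrank_add_finrank_dualAnnihilator_eq W
    omega
  have := Submodule.finrank_le_finrank_inf_ker_add (F ∘ₗ j) hmaps
  rw [LinearMap.ker_comp] at this
  omega

/-- With `f ∈ (⋀³V)*` nonzero of associated form `φ`, `K(H) = ker f̃ ⊆ ⋀²V`, `t ≤ (n-2)/2`,
`δ(H) < n - 1 - 2t`, and `W ≤ V` of dimension `n - t` with restricted map `f̃_W : ⋀²W → W*`
of kernel `K(H(W))`, one has `dim( K(H(W)) / (K(H) ∩ K(H(W))) ) ≤ t`, where `⋀²W` is viewed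
inside `⋀²V` via the canonical map `j`. -/
theorem stmt_17 (K V : Type*) [Field K] [AddCommGroup V] [Module K V] [FiniteDimensional K V]
    (n t : ℕ) (hn : finrank K V = n) (hn5 : 5 ≤ n) (ht : 2 * t ≤ n - 2)
    (f : Module.Dual K (⋀[K]^3 V)) (hf : f ≠ 0)
    (φ : AlternatingMap K V K (Fin 3))
    (hφ : ∀ v : Fin 3 → V, φ v = f (wedge K 3 v))
    (hdepth : ∀ v : V, v ≠ 0 → ∀ Rv : Submodule K V,
      (∀ x : V, x ∈ Rv ↔ ∀ y : V, φ ![v, x, y] = 0) → finrank K Rv < n - 2 * t)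
    (F : (⋀[K]^2 V) →ₗ[K] Module.Dual K V)
    (hF : ∀ x y z : V, F (wedge K 2 ![x, y]) z = φ ![x, y, z])
    (W : Submodule K V) (hW : finrank K W = n - t)
    (FW : (⋀[K]^2 W) →ₗ[K] Module.Dual K W)
    (hFW : ∀ x y w : W, FW (wedge K 2 ![x, y]) w = φ ![(x : V), (y : V), (w : V)])
    (j : (⋀[K]^2 W) →ₗ[K] (⋀[K]^2 V))
    (hj : ∀ v : Fin 2 → W, j (wedge K 2 v) = wedge K 2 (fun i => (v i : V))) :
    finrank K (LinearMap.ker FW) ≤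
      finrank K (LinearMap.ker FW ⊓ Submodule.comap j (LinearMap.ker F) :
        Submodule K (⋀[K]^2 W)) + t :=
  stmt_17_general K V n t hn φ F hF W hW FW hFW j hj
end

section
/- Let q be a prime power and let r be a positive integer with r ≡ 1 (mod 3). Set M = ((q^{2r}−1)/(q−1))·(1 + q²·(q^{2r−2}−1)/(q²−1)), the number of lines of a non-degenerate symplectic polar space of rank r over F_q in a (2r)-dimensional space. Then (q²+q+1) does not divide M·(q^{2r+2}−1)/(q−1); in fact M·(q^{2r+2}−1)/(q−1) ≡ q+1 (mod q²+q+1). -/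
/-! Reduce modulo `d = q² + q + 1`, where `q² + q + 1 = 0` and hence `q³ = 1`. Each quotient
`(q^n - 1)/(q - 1)` is the geometric sum `1 + q + ⋯ + q^(n-1)`, whose residue only depends on
`n mod 3`; for `r ≡ 1 (mod 3)` the three factors reduce to `1 + q`, `1 + q² · 0` and `1`. -/

open Finset

section CubeRoot

variable {R : Type*} [CommRing R] {x : R}

theorem pow_three_eq_one_of_sq_add_self_add_one (h : x ^ 2 + x + 1 = 0) : x ^ 3 = 1 := by
  linear_combination (x - 1) * h

theorem sq_sq_add_sq_add_one (h : x ^ 2 + x + 1 = 0) : (x ^ 2) ^ 2 + x ^ 2 + 1 = 0 := by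
  linear_combination (x ^ 2 - x + 1) * h

theorem geom_sum_three_eq_zero (h : x ^ 2 + x + 1 = 0) : ∑ i ∈ range 3, x ^ i = 0 := by
  simp only [sum_range_succ, sum_range_zero]
  linear_combination h

theorem geom_sum_eq_geom_sum_mod_three (h : x ^ 2 + x + 1 = 0) (n : ℕ) :
    ∑ i ∈ range n, x ^ i = ∑ i ∈ range (n % 3), x ^ i := by
  induction n using Nat.strong_induction_on with
  | _ n ih =>
    rcases lt_or_ge n 3 with hn | hn
    · rw [Nat.mod_eq_of_lt hn]
    · obtain ⟨m, rfl⟩ := Nat.exists_eq_add_of_le hn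
      have hcube := pow_three_eq_one_of_sq_add_self_add_one h
      simp only [sum_range_add, pow_add, hcube, one_mul, geom_sum_three_eq_zero h, zero_add]
      rw [ih m (by omega), Nat.add_mod_left]

end CubeRoot

theorem natCast_sq_add_self_add_one_eq_zero (q : ℕ) :
    (q : ZMod (q ^ 2 + q + 1)) ^ 2 + q + 1 = 0 := by
  exact_mod_cast ZMod.natCast_self (q ^ 2 + q + 1)

theorem stmt_18_general (q r : ℕ) (hq : IsPrimePow q) (hr3 : r % 3 = 1) :
    ¬ (q ^ 2 + q + 1 ∣
        ((q ^ (2 * r) - 1) / (q - 1) * (1 + q ^ 2 * ((q ^ (2 * r - 2) - 1) / (q ^ 2 - 1)))) *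
          ((q ^ (2 * r + 2) - 1) / (q - 1))) ∧
    ((q ^ (2 * r) - 1) / (q - 1) * (1 + q ^ 2 * ((q ^ (2 * r - 2) - 1) / (q ^ 2 - 1)))) *
        ((q ^ (2 * r + 2) - 1) / (q - 1)) % (q ^ 2 + q + 1) = q + 1 := by
  have hq2 : 2 ≤ q := hq.two_le
  have hpow : q ^ (2 * r - 2) = (q ^ 2) ^ (r - 1) := by rw [← pow_mul, Nat.mul_sub_one]
  rw [hpow, ← Nat.geomSum_eq hq2, ← Nat.geomSum_eq hq2,
    ← Nat.geomSum_eq (by nlinarith : 2 ≤ q ^ 2)]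
  set d := q ^ 2 + q + 1
  have hx := natCast_sq_add_self_add_one_eq_zero q
  have hresidue : ((∑ i ∈ range (2 * r), q ^ i) * (1 + q ^ 2 * ∑ i ∈ range (r - 1), (q ^ 2) ^ i) *
      ∑ i ∈ range (2 * r + 2), q ^ i : ℕ) = ((q + 1 : ℕ) : ZMod d) := by
    push_cast
    rw [geom_sum_eq_geom_sum_mod_three hx (2 * r), geom_sum_eq_geom_sum_mod_three hx (2 * r + 2),
      geom_sum_eq_geom_sum_mod_three (sq_sq_add_sq_add_one hx) (r - 1),
      show 2 * r % 3 = 2 by omega, show (2 * r + 2) % 3 = 1 by omega,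
      show (r - 1) % 3 = 0 by omega]
    simp only [sum_range_succ, sum_range_zero]
    ring
  have hmod := (ZMod.natCast_eq_natCast_iff' _ _ _).mp hresidue
  rw [Nat.mod_eq_of_lt (by nlinarith : q + 1 < q ^ 2 + q + 1)] at hmod
  refine ⟨fun hdvd => ?_, hmod⟩
  rw [Nat.dvd_iff_mod_eq_zero] at hdvd
  omega

/-- For a prime power `q` and `r ≡ 1 (mod 3)`, with
`M = ((q^{2r}-1)/(q-1))·(1 + q²·(q^{2r-2}-1)/(q²-1))` the number of lines of a non-degenerate
rank-`r` symplectic polar space over `F_q`, the number `q² + q + 1` does not divide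
`M·(q^{2r+2}-1)/(q-1)`; indeed `M·(q^{2r+2}-1)/(q-1) ≡ q + 1 (mod q² + q + 1)`. -/
theorem stmt_18 (q r : ℕ) (hq : IsPrimePow q) (hr : 0 < r) (hr3 : r % 3 = 1) :
    ¬ (q ^ 2 + q + 1 ∣
        ((q ^ (2 * r) - 1) / (q - 1) * (1 + q ^ 2 * ((q ^ (2 * r - 2) - 1) / (q ^ 2 - 1)))) *
          ((q ^ (2 * r + 2) - 1) / (q - 1))) ∧
    ((q ^ (2 * r) - 1) / (q - 1) * (1 + q ^ 2 * ((q ^ (2 * r - 2) - 1) / (q ^ 2 - 1)))) *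
        ((q ^ (2 * r + 2) - 1) / (q - 1)) % (q ^ 2 + q + 1) = q + 1 :=
  stmt_18_general q r hq hr3
end
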